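/- Let N be a CCI-envelope of a CCI X of size k ≥ 4 with Y = E(N)\X. Suppose (J; X₁, X₂) is a hyperplane-partition with |X₁| ∈ {2, 3}, and (J*; X₁*, X₂*) is a cohyperplane-partition with J* ≠ J. Then X₁ ⊆ X₁* or X₁ ⊆ X₂*. -/

import Mathlib

/-!
Since `|Y| = k - 2` and `|J| = |J*| = k - 3`, we have `Y \ J = {y}` and `Y \ J* = {y*}` with
`y ≠ y*`. Complements of hyperplanes are cocircuits, so `X₁ ∪ {y}` is a cocircuit of `N`, and
dually `X₁* ∪ {y*}` and `X₂* ∪ {y*}` are circuits. A circuit and a cocircuit never meet in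
exactly one element, so neither `X₁ ∩ X₁*` nor `X₁ ∩ X₂*` is a singleton; as these partition
`X₁` and `|X₁| ≤ 3`, one of them is empty.
-/
open Set

namespace Matroid

variable {α : Type*}

/-- A circuit: a minimal dependent set. -/
def IsCircuit' (M : Matroid α) (C : Set α) : Prop :=
  C ⊆ M.E ∧ ¬ M.Indep C ∧ ∀ D, D ⊂ C → M.Indep D

/-- A cocircuit: a circuit of the dual matroid. -/
def IsCocircuit' (M : Matroid α) (C : Set α) : Prop :=
  M✶.IsCircuit' C

/-- A circuit-cocircuit intersection (CCI). -/
def IsCCI (M : Matroid α) (X : Set α) : Prop :=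
  ∃ C K, M.IsCircuit' C ∧ M.IsCocircuit' K ∧ X = C ∩ K

/-- A hyperplane: a maximal proper flat. -/
def IsHyperplane (M : Matroid α) (H : Set α) : Prop :=
  M.IsFlat H ∧ H ≠ M.E ∧ ∀ F, M.IsFlat F → H ⊂ F → F = M.E

/-- The rank of a set: the largest size of an independent subset. -/
noncomputable def rk (M : Matroid α) (A : Set α) : ℕ :=
  sSup {n | ∃ I, I ⊆ A ∧ M.Indep I ∧ I.ncard = n}

/-- The rank of a matroid. -/
noncomputable def rank (M : Matroid α) : ℕ := M.rk M.E

/-- Deletion of a set from a matroid. -/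
def del (M : Matroid α) (D : Set α) : Matroid α := M.restrict (M.E \ D)

/-- Contraction of a set in a matroid. -/
def con (M : Matroid α) (C : Set α) : Matroid α := (M✶.restrict (M.E \ C))✶

/-- `N` is a minor of `M` if it is obtained by a contraction followed by a deletion. -/
def IsMinor' (N M : Matroid α) : Prop := ∃ C D, N = (M.con C).del D

end Matroid

open Matroid

namespace Set

variable {α : Type*}

lemma exists_sdiff_eq_singleton_of_ncard_eq_add_one {J Y : Set α} (hJY : J ⊆ Y)
    (hY : Y.Finite) (h : Y.ncard = J.ncard + 1) : ∃ y, Y \ J = {y} :=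
  ncard_eq_one.mp (by rw [ncard_sdiff hJY (hY.subset hJY)]; omega)

lemma sdiff_union_eq_union_singleton {E X J A B : Set α} {y : α} (hXE : X ⊆ E)
    (hJ : J ⊆ E \ X) (hAB : A ∪ B = X) (hd : Disjoint A B) (hy : (E \ X) \ J = {y}) :
    E \ (J ∪ A) = B ∪ {y} := by
  subst hAB
  rw [← hy]
  ext z
  have hzJ := @hJ z
  have hzX := @hXE z
  have hzd := @disjoint_left.mp hd z
  simp only [mem_sdiff, mem_union] at *
  tauto

lemma union_singleton_inter_union_singleton {A B : Set α} {a b : α} (haB : a ∉ B) (hbA : b ∉ A)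
    (hab : a ≠ b) : (A ∪ {a}) ∩ (B ∪ {b}) = A ∩ B := by
  ext z
  simp only [mem_inter_iff, mem_union, mem_singleton_iff]
  grind

lemma subset_or_subset_of_ncard_inter_ne_one {A P Q : Set α} (hA : A.Finite) (hA3 : A.ncard ≤ 3)
    (hAPQ : A ⊆ P ∪ Q) (hPQ : Disjoint P Q) (hP : (A ∩ P).ncard ≠ 1) (hQ : (A ∩ Q).ncard ≠ 1) :
    A ⊆ P ∨ A ⊆ Q := by
  have hsum : (A ∩ P).ncard + (A ∩ Q).ncard = A.ncard := by
    rw [← ncard_union_eq (hPQ.mono inter_subset_right inter_subset_right)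
      (hA.subset inter_subset_left) (hA.subset inter_subset_left), ← inter_union_distrib_left,
      inter_eq_left.mpr hAPQ]
  rcases (by omega : (A ∩ Q).ncard = 0 ∨ (A ∩ P).ncard = 0) with h | h
  · left
    rw [ncard_eq_zero (hA.subset inter_subset_left), ← disjoint_iff_inter_eq_empty] at h
    exact h.subset_left_of_subset_union hAPQ
  · right
    rw [ncard_eq_zero (hA.subset inter_subset_left), ← disjoint_iff_inter_eq_empty] at h
    exact h.subset_right_of_subset_union hAPQ

end Set

namespace Matroid

variable {α : Type*} {M : Matroid α} {C H K J A B X : Set α} {a b y : α}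

lemma isCircuit'_iff : M.IsCircuit' C ↔ M.IsCircuit C := by
  rw [isCircuit_iff_forall_ssubset, Dep, IsCircuit']
  exact ⟨fun ⟨hCE, hC, hmin⟩ ↦ ⟨⟨hC, hCE⟩, fun I hI ↦ hmin I hI⟩,
    fun ⟨⟨hC, hCE⟩, hmin⟩ ↦ ⟨hCE, hC, fun I hI ↦ hmin hI⟩⟩

lemma IsHyperplane.sdiff_isCocircuit (hH : M.IsHyperplane H) : M.IsCocircuit (M.E \ H) := by
  obtain ⟨hHF, hHE, hmax⟩ := hH
  have hHsub := hHF.subset_ground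
  rw [isCocircuit_iff_minimal_compl_nonspanning', minimal_iff_forall_ssubset,
    sdiff_sdiff_cancel_left hHsub, spanning_iff_closure_eq hHsub, hHF.closure]
  refine ⟨⟨hHE, sdiff_subset⟩, fun K hK hKsp ↦ hKsp.1 ?_⟩
  obtain ⟨e, ⟨heE, heH⟩, heK⟩ := exists_of_ssubset hK
  have hcl : M.closure (insert e H) = M.E := by
    refine hmax _ (M.isFlat_closure _) (ssubset_of_subset_of_ne
      ((subset_insert e H).trans (M.subset_closure _ (insert_subset heE hHsub))) ?_)
    intro hHcl
    exact heH (hHcl ▸ M.mem_closure_of_mem (mem_insert e H) (insert_subset heE hHsub))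
  rw [spanning_iff_ground_subset_closure sdiff_subset]
  refine hcl.symm.subset.trans (M.closure_subset_closure (insert_subset ⟨heE, heK⟩ ?_))
  exact fun x hx ↦ ⟨hHsub hx, fun hxK ↦ (hK.subset hxK).2 hx⟩

lemma IsHyperplane.sdiff_isCircuit_of_dual (hH : M✶.IsHyperplane H) :
    M.IsCircuit (M.E \ H) := by
  simpa using hH.sdiff_isCocircuit

lemma IsHyperplane.isCocircuit_union_singleton (hH : M.IsHyperplane (J ∪ A)) (hXE : X ⊆ M.E)
    (hJ : J ⊆ M.E \ X) (hAB : A ∪ B = X) (hd : Disjoint A B) (hy : (M.E \ X) \ J = {y}) :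
    M.IsCocircuit (B ∪ {y}) :=
  sdiff_union_eq_union_singleton hXE hJ hAB hd hy ▸ hH.sdiff_isCocircuit

lemma IsHyperplane.isCircuit_union_singleton_of_dual (hH : M✶.IsHyperplane (J ∪ A))
    (hXE : X ⊆ M.E) (hJ : J ⊆ M.E \ X) (hAB : A ∪ B = X) (hd : Disjoint A B)
    (hy : (M.E \ X) \ J = {y}) : M.IsCircuit (B ∪ {y}) :=
  sdiff_union_eq_union_singleton hXE hJ hAB hd hy ▸ hH.sdiff_isCircuit_of_dual

lemma IsCocircuit.ncard_inter_ne_one_of_union_singleton (hK : M.IsCocircuit (K ∪ {b}))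
    (hC : M.IsCircuit (C ∪ {a})) (haK : a ∉ K) (hbC : b ∉ C) (hab : a ≠ b) :
    (K ∩ C).ncard ≠ 1 := by
  intro h
  obtain ⟨e, he⟩ := ncard_eq_one.mp h
  apply hC.inter_isCocircuit_ne_singleton hK (e := e)
  rwa [union_singleton_inter_union_singleton haK hbC hab, inter_comm]

end Matroid

theorem stmt_12_general {α : Type*} (N : Matroid α) (k : ℕ) (hk : 4 ≤ k)
    (hE : N.E.ncard = 2 * k - 2)
    (X : Set α) (hXcard : X.ncard = k)
    (hXc : N.IsCircuit' X)
    (J X₁ X₂ : Set α) (hJ : J ⊆ N.E \ X) (hJcard : J.ncard = k - 3)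
    (hX₁₂ : X₁ ∪ X₂ = X) (hdisj : Disjoint X₁ X₂)
    (hH₂ : N.IsHyperplane (J ∪ X₂))
    (hX₁card : X₁.ncard = 2 ∨ X₁.ncard = 3)
    (Jst X₁st X₂st : Set α) (hJst : Jst ⊆ N.E \ X) (hJstcard : Jst.ncard = k - 3)
    (hX₁₂st : X₁st ∪ X₂st = X) (hdisjst : Disjoint X₁st X₂st)
    (hH₁st : N✶.IsHyperplane (Jst ∪ X₁st)) (hH₂st : N✶.IsHyperplane (Jst ∪ X₂st))
    (hne : Jst ≠ J) :
    X₁ ⊆ X₁st ∨ X₁ ⊆ X₂st := by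
  have hXE : X ⊆ N.E := (isCircuit'_iff.mp hXc).subset_ground
  have hEfin : N.E.Finite := finite_of_ncard_pos (by omega)
  have hYcard : (N.E \ X).ncard = k - 2 := by
    rw [ncard_sdiff hXE (hEfin.subset hXE), hE, hXcard]; omega
  obtain ⟨y, hy⟩ := exists_sdiff_eq_singleton_of_ncard_eq_add_one hJ hEfin.sdiff (by omega)
  obtain ⟨yst, hyst⟩ :=
    exists_sdiff_eq_singleton_of_ncard_eq_add_one hJst hEfin.sdiff (by omega)
  have hyst_ne : yst ≠ y := by
    rintro rfl
    rw [← hy] at hyst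
    exact hne (by rw [← sdiff_sdiff_cancel_left hJst, hyst, sdiff_sdiff_cancel_left hJ])
  have hyX : y ∉ X := (hy.symm.subset rfl).1.2
  have hystX : yst ∉ X := (hyst.symm.subset rfl).1.2
  have hX₁X : X₁ ⊆ X := hX₁₂ ▸ subset_union_left
  have hK := hH₂.isCocircuit_union_singleton hXE hJ (union_comm X₂ X₁ ▸ hX₁₂) hdisj.symm hy
  have hC₁ := hH₂st.isCircuit_union_singleton_of_dual hXE hJst (union_comm X₂st X₁st ▸ hX₁₂st)
    hdisjst.symm hyst
  have hC₂ := hH₁st.isCircuit_union_singleton_of_dual hXE hJst hX₁₂st hdisjst hyst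
  exact subset_or_subset_of_ncard_inter_ne_one ((hEfin.subset hXE).subset hX₁X) (by omega)
    (hX₁₂st ▸ hX₁X) hdisjst
    (hK.ncard_inter_ne_one_of_union_singleton hC₁ (fun h ↦ hystX (hX₁X h))
      (fun h ↦ hyX (hX₁₂st ▸ subset_union_left h)) hyst_ne)
    (hK.ncard_inter_ne_one_of_union_singleton hC₂ (fun h ↦ hystX (hX₁X h))
      (fun h ↦ hyX (hX₁₂st ▸ subset_union_right h)) hyst_ne)

theorem stmt_12 {α : Type*} (N : Matroid α) (k : ℕ) (hk : 4 ≤ k)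
    (hE : N.E.ncard = 2 * k - 2) (hr : N.rank = k - 1) (hr' : N✶.rank = k - 1)
    (X : Set α) (hXcard : X.ncard = k)
    (hXc : N.IsCircuit' X) (hXcc : N.IsCocircuit' X)
    (J X₁ X₂ : Set α) (hJ : J ⊆ N.E \ X) (hJcard : J.ncard = k - 3)
    (hX₁₂ : X₁ ∪ X₂ = X) (hdisj : Disjoint X₁ X₂)
    (hH₁ : N.IsHyperplane (J ∪ X₁)) (hH₂ : N.IsHyperplane (J ∪ X₂))
    (hX₁card : X₁.ncard = 2 ∨ X₁.ncard = 3)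
    (Jst X₁st X₂st : Set α) (hJst : Jst ⊆ N.E \ X) (hJstcard : Jst.ncard = k - 3)
    (hX₁₂st : X₁st ∪ X₂st = X) (hdisjst : Disjoint X₁st X₂st)
    (hH₁st : N✶.IsHyperplane (Jst ∪ X₁st)) (hH₂st : N✶.IsHyperplane (Jst ∪ X₂st))
    (hne : Jst ≠ J) :
    X₁ ⊆ X₁st ∨ X₁ ⊆ X₂st :=
  stmt_12_general N k hk hE X hXcard hXc J X₁ X₂ hJ hJcard hX₁₂ hdisj hH₂ hX₁card Jst X₁st X₂st hJst
    hJstcard hX₁₂st hdisjst hH₁st hH₂st hne
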